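/- arXiv:1904.10574 — 4 statements merged into one kernel-verified Lean document; each statement's English description precedes it below -/
import Mathlib

section
/- Let w take values in [0,1] on ordered pairs of distinct vertices from {1,...,m} with w(j,k) + w(k,j) = 1 for all distinct j,k, and w(i,j) + w(j,k) + w(k,i) ≤ 2 for all distinct i,j,k. Then for every pair of distinct vertices j,k: m·w(j,k) − (m−1) ≤ Σ_{i≠k} w(i,k) − Σ_{i≠j} w(i,j). -/
/-!
Fix `j ≠ k`. Splitting off the terms `i = j` and `i = k`, the right-hand side equals
`w j k - w k j + ∑_{i ∉ {j, k}} (w i k - w i j)`. For each such `i`, the triangle inequality for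
`(i, j, k)` together with `w k i = 1 - w i k` gives `w i k - w i j ≥ w j k - 1`; summing these
`m - 2` bounds and using `w k j = 1 - w j k` yields the claim.
-/

open Finset

section

variable {α : Type*}

theorem sub_one_le_sub_of_triangle {w : α → α → ℝ} (hsum : ∀ j k, j ≠ k → w j k + w k j = 1)
    (htri : ∀ i j k, i ≠ j → j ≠ k → i ≠ k → w i j + w j k + w k i ≤ 2)
    {i j k : α} (hij : i ≠ j) (hjk : j ≠ k) (hik : i ≠ k) :
    w j k - 1 ≤ w i k - w i j := by
  linarith [htri i j k hij hjk hik, hsum i k hik]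

variable [Fintype α] [DecidableEq α]

theorem sum_erase_eq_add_sum_compl_pair {M : Type*} [AddCancelCommMonoid M] (f : α → M)
    {j k : α} (hjk : j ≠ k) :
    ∑ i ∈ univ.erase k, f i = f j + ∑ i ∈ ({j, k}ᶜ : Finset α), f i := by
  have h_erase := sum_erase_add univ f (mem_univ k)
  have h_compl := sum_compl_add_sum {j, k} f
  rw [sum_pair hjk] at h_compl
  refine add_right_cancel (b := f k) ?_
  rw [h_erase, ← h_compl]
  abel

theorem card_compl_pair_add_two {j k : α} (hjk : j ≠ k) :
    #({j, k}ᶜ : Finset α) + 2 = Fintype.card α := by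
  rw [← card_pair hjk, card_compl_add_card]

theorem card_mul_sub_le_sum_erase_sub_sum_erase {w : α → α → ℝ}
    (hsum : ∀ j k, j ≠ k → w j k + w k j = 1)
    (htri : ∀ i j k, i ≠ j → j ≠ k → i ≠ k → w i j + w j k + w k i ≤ 2)
    {j k : α} (hjk : j ≠ k) :
    (Fintype.card α : ℝ) * w j k - (Fintype.card α - 1) ≤
      (∑ i ∈ univ.erase k, w i k) - ∑ i ∈ univ.erase j, w i j := by
  set S : Finset α := {j, k}ᶜ with hS
  have h_each : ∀ i ∈ S, w j k - 1 ≤ w i k - w i j := by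
    intro i hi
    simp only [hS, mem_compl, mem_insert, mem_singleton, not_or] at hi
    exact sub_one_le_sub_of_triangle hsum htri hi.1 hjk hi.2
  have h_bound : (#S : ℝ) * (w j k - 1) ≤ ∑ i ∈ S, w i k - ∑ i ∈ S, w i j := by
    simpa only [nsmul_eq_mul, sum_sub_distrib] using card_nsmul_le_sum S _ _ h_each
  have h_card : (#S : ℝ) + 2 = Fintype.card α := by exact_mod_cast card_compl_pair_add_two hjk
  rw [sum_erase_eq_add_sum_compl_pair _ hjk, sum_erase_eq_add_sum_compl_pair _ hjk.symm,
    pair_comm k j, ← h_card]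
  linarith [hsum j k hjk]

end

theorem stmt_12_general (m : ℕ) (w : Fin m → Fin m → ℝ)
    (hsum : ∀ j k : Fin m, j ≠ k → w j k + w k j = 1)
    (htri : ∀ i j k : Fin m, i ≠ j → j ≠ k → i ≠ k → w i j + w j k + w k i ≤ 2) :
    ∀ j k : Fin m, j ≠ k →
      (m : ℝ) * w j k - ((m : ℝ) - 1) ≤
        (∑ i ∈ Finset.univ.erase k, w i k) - (∑ i ∈ Finset.univ.erase j, w i j) := by
  intro j k hjk
  simpa only [Fintype.card_fin] using card_mul_sub_le_sum_erase_sub_sum_erase hsum htri hjk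

theorem stmt_12 (m : ℕ) (w : Fin m → Fin m → ℝ)
    (h0 : ∀ j k : Fin m, j ≠ k → 0 ≤ w j k)
    (h1 : ∀ j k : Fin m, j ≠ k → w j k ≤ 1)
    (hsum : ∀ j k : Fin m, j ≠ k → w j k + w k j = 1)
    (htri : ∀ i j k : Fin m, i ≠ j → j ≠ k → i ≠ k → w i j + w j k + w k i ≤ 2) :
    ∀ j k : Fin m, j ≠ k →
      (m : ℝ) * w j k - ((m : ℝ) - 1) ≤
        (∑ i ∈ Finset.univ.erase k, w i k) - (∑ i ∈ Finset.univ.erase j, w i j) :=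
  stmt_12_general m w hsum htri
end

section
/- Let w take values in [0,1] on ordered pairs of distinct vertices with w(j,k)+w(k,j)=1 for all distinct j,k and w(i,j)+w(j,k)+w(k,i) ≤ 2 for all distinct i,j,k (triangle inequalities). Then for every directed cycle v_1, v_2, ..., v_p, v_1 of distinct vertices, Σ w(v_i, v_{i+1}) + w(v_p, v_1) ≤ p − 1. -/
/-!
Induction on the length of the cycle, starting from a triangle. Inserting a vertex `x` between
`a` and `b` replaces the arc `(a, b)` by `(a, x)` and `(x, b)`; the triangle inequality for
`a, x, b` and `w a b + w b a = 1` give `w a x + w x b ≤ w a b + 1`, so the bound grows by one.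
-/

open Finset

section CycleWeight

variable {V : Type*} (w : V → V → ℝ)

theorem cycle_weight_le_of_injOn
    (hsum : ∀ j k : V, j ≠ k → w j k + w k j = 1)
    (htri : ∀ i j k : V, i ≠ j → j ≠ k → i ≠ k → w i j + w j k + w k i ≤ 2)
    (n : ℕ) (hn : 2 ≤ n) (u : ℕ → V) (hu : Set.InjOn u (Set.Iic n)) :
    ∑ i ∈ range n, w (u i) (u (i + 1)) + w (u n) (u 0) ≤ n := by
  have hne : ∀ {i j : ℕ}, i ≤ n → j ≤ n → i ≠ j → u i ≠ u j := fun hi hj =>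
    (hu.ne_iff (Set.mem_Iic.2 hi) (Set.mem_Iic.2 hj)).2
  induction n, hn using Nat.le_induction with
  | base =>
    have := htri (u 0) (u 1) (u 2) (hne (by omega) (by omega) (by omega))
      (hne (by omega) (by omega) (by omega)) (hne (by omega) (by omega) (by omega))
    simp only [sum_range_succ, sum_range_zero]
    push_cast
    linarith
  | succ n hn ih =>
    have hshorter := ih (hu.mono (Set.Iic_subset_Iic.2 n.le_succ))
      fun hi hj => hne (by omega) (by omega)
    have htriangle := htri (u n) (u (n + 1)) (u 0) (hne (by omega) le_rfl (by omega))
      (hne le_rfl (by omega) (by omega)) (hne (by omega) (by omega) (by omega))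
    have hchord := hsum (u n) (u 0) (hne (by omega) (by omega) (by omega))
    rw [sum_range_succ]
    push_cast
    linarith

end CycleWeight

theorem stmt_13 {V : Type*} (w : V → V → ℝ)
    (hsum : ∀ j k : V, j ≠ k → w j k + w k j = 1)
    (htri : ∀ i j k : V, i ≠ j → j ≠ k → i ≠ k → w i j + w j k + w k i ≤ 2) :
    ∀ p : ℕ, ∀ hp : 3 ≤ p, ∀ v : Fin p → V, Function.Injective v →
      (∑ i : Fin p, w (v i) (v ⟨(i.1 + 1) % p, Nat.mod_lt _ (by omega)⟩)) ≤ (p : ℝ) - 1 := by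
  intro p hp v hv
  obtain ⟨n, rfl⟩ : ∃ n, p = n + 1 := ⟨p - 1, by omega⟩
  set u : ℕ → V := fun i => v ⟨i % (n + 1), Nat.mod_lt _ n.succ_pos⟩
  have hu : Set.InjOn u (Set.Iic n) := fun i hi j hj h => by
    have : i % (n + 1) = j % (n + 1) := Fin.ext_iff.1 (hv h)
    simp only [Set.mem_Iic] at hi hj
    rwa [Nat.mod_eq_of_lt (by omega), Nat.mod_eq_of_lt (by omega)] at this
  have hvu : ∀ i : Fin (n + 1), v i = u i := fun i => by
    simp only [u, Nat.mod_eq_of_lt i.2]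
  have hclose : u (n + 1) = u 0 := by simp only [u, Nat.mod_self, Nat.zero_mod]
  calc ∑ i : Fin (n + 1), w (v i) (v ⟨(i.1 + 1) % (n + 1), _⟩)
      = ∑ i ∈ range (n + 1), w (u i) (u (i + 1)) := by
        rw [← Fin.sum_univ_eq_sum_range (fun i => w (u i) (u (i + 1)))]
        exact sum_congr rfl fun i _ => by rw [hvu]
    _ = ∑ i ∈ range n, w (u i) (u (i + 1)) + w (u n) (u 0) := by rw [sum_range_succ, hclose]
    _ ≤ n := cycle_weight_le_of_injOn w hsum htri n (by omega) u hu
    _ = ((n + 1 : ℕ) : ℝ) - 1 := by push_cast; ring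
end

section
/- Let G be a directed graph on m vertices that admits a topological ordering given by a permutation matrix o (o(r,s)=1 iff vertex r has order s) satisfying, for every arc (j,k): 1 − m·[arc (k,j) present] ≤ Σ_s s·(o(k,s) − o(j,s)). If additionally at most one of each pair of opposite arcs is present, then the relation z(i,j)=1 (arc present) is transitive on the underlying bidirectional edge set: z(i,j)=1 and z(j,k)=1 imply z(i,k)=1 whenever the pair (i,k) is an edge of the super-structure. -/
/-!
Read `p r = ∑ s, (s + 1) * o r s` as the position of vertex `r` in the ordering. Since opposite
arcs never coexist, the constraint says that an arc `j → k` forces `p j + 1 ≤ p k`, and an edge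
`{j, k}` without the arc `k → j` forces `p j ≤ p k`. If `i → j → k` but not `i → k`, this gives
`p i + 2 ≤ p k ≤ p i`.
-/

namespace TopologicalOrdering

variable {V : Type*} {A E : V → V → Prop} [∀ j k, Decidable (A j k)] {p : V → ℝ} {c : ℝ}

theorem add_one_le_of_arc (hasym : ∀ j k, ¬ (A j k ∧ A k j))
    (hcon : ∀ j k, E j k →
      (if A j k then (1 : ℝ) else 0) - c * (if A k j then (1 : ℝ) else 0) ≤ p k - p j)
    {j k : V} (hE : E j k) (hA : A j k) : p j + 1 ≤ p k := by
  have h := hcon j k hE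
  rw [if_pos hA, if_neg fun h' => hasym j k ⟨hA, h'⟩] at h
  linarith

theorem le_of_edge_of_not_arc
    (hcon : ∀ j k, E j k →
      (if A j k then (1 : ℝ) else 0) - c * (if A k j then (1 : ℝ) else 0) ≤ p k - p j)
    {j k : V} (hE : E j k) (hA : ¬ A k j) : p j ≤ p k := by
  have h := hcon j k hE
  rw [if_neg hA] at h
  have : (0 : ℝ) ≤ if A j k then 1 else 0 := by split_ifs <;> norm_num
  linarith

theorem arc_trans (hE_symm : ∀ j k, E j k → E k j) (hAE : ∀ j k, A j k → E j k)
    (hasym : ∀ j k, ¬ (A j k ∧ A k j))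
    (hcon : ∀ j k, E j k →
      (if A j k then (1 : ℝ) else 0) - c * (if A k j then (1 : ℝ) else 0) ≤ p k - p j)
    {i j k : V} (hEik : E i k) (hAij : A i j) (hAjk : A j k) : A i k := by
  by_contra hAik
  have hij := add_one_le_of_arc hasym hcon (hAE i j hAij) hAij
  have hjk := add_one_le_of_arc hasym hcon (hAE j k hAjk) hAjk
  have hki := le_of_edge_of_not_arc hcon (hE_symm i k hEik) hAik
  linarith

end TopologicalOrdering

open Classical in
theorem stmt_15_general (m : ℕ) (A E : Fin m → Fin m → Prop)
    (hE_symm : ∀ j k, E j k → E k j)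
    (hAE : ∀ j k, A j k → E j k)
    (hasym : ∀ j k, ¬ (A j k ∧ A k j))
    (o : Fin m → Fin m → ℝ)
    (hcon : ∀ j k, E j k →
      (if A j k then (1 : ℝ) else 0) - (m : ℝ) * (if A k j then (1 : ℝ) else 0) ≤
        ∑ s : Fin m, ((s : ℕ) + 1 : ℝ) * (o k s - o j s)) :
    ∀ i j k, E i k → A i j → A j k → A i k := by
  intro i j k hEik hAij hAjk
  refine TopologicalOrdering.arc_trans (c := m)
    (p := fun r => ∑ s : Fin m, ((s : ℕ) + 1 : ℝ) * o r s)
    hE_symm hAE hasym (fun j k hE => ?_) hEik hAij hAjk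
  simpa only [mul_sub, Finset.sum_sub_distrib] using hcon j k hE

open Classical in
theorem stmt_15 (m : ℕ) (A E : Fin m → Fin m → Prop)
    (hE_symm : ∀ j k, E j k → E k j) (hE_irr : ∀ v, ¬ E v v)
    (hAE : ∀ j k, A j k → E j k)
    (hasym : ∀ j k, ¬ (A j k ∧ A k j))
    (o : Fin m → Fin m → ℝ)
    (h01 : ∀ r s, o r s = 0 ∨ o r s = 1)
    (hrow : ∀ r, ∑ s, o r s = 1)
    (hcol : ∀ s, ∑ r, o r s = 1)
    (hcon : ∀ j k, E j k →
      (if A j k then (1 : ℝ) else 0) - (m : ℝ) * (if A k j then (1 : ℝ) else 0) ≤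
        ∑ s : Fin m, ((s : ℕ) + 1 : ℝ) * (o k s - o j s)) :
    ∀ i j k, E i k → A i j → A j k → A i k :=
  stmt_15_general m A E hE_symm hAE hasym o hcon
end

section
/- Any feasible 0-1 solution (z, ψ) of the layered network constraints (z(j,k)+z(k,j)=1 on each super-structure edge; z(j,k) − (m−1)z(k,j) ≤ ψ(k) − ψ(j); 1 ≤ ψ ≤ m) can be mapped to a feasible solution of the topological ordering constraints by ranking the vertices according to ψ (breaking ties arbitrarily) and setting o(j, rank of j) = 1; the resulting (z, o) satisfies z(j,k) − m·z(k,j) ≤ Σ_s s·(o(k,s) − o(j,s)) for every super-structure arc (j,k). -/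
/-!
Rank the vertices by `ψ` with a permutation `σ`, so that `ψ j < ψ k` forces `σ j < σ k`, and put
`o j s = 1` exactly when `s = σ j`; then `∑ s, (s + 1) * o j s = σ j + 1` is the position of `j`.
On an arc `(j, k)` with `z j k = 1` the layered constraint gives `ψ k - ψ j ≥ 1`, so `σ j < σ k`
and the position difference is at least `1`; with `z j k = 0` the left-hand side is `-m`, below
any difference of two positions in `{1, …, m}`.
-/

open Finset

/-- The rank of each index in a nondescending ordering of the values of `f`. -/
def rankPerm {n : ℕ} {α : Type*} [LinearOrder α] (f : Fin n → α) : Equiv.Perm (Fin n) :=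
  (Tuple.sort f)⁻¹

theorem rankPerm_lt_rankPerm {n : ℕ} {α : Type*} [LinearOrder α] (f : Fin n → α) {j k : Fin n}
    (h : f j < f k) : rankPerm f j < rankPerm f k := by
  by_contra! hle
  have hmono := Tuple.monotone_sort f hle
  simp only [Function.comp_apply, rankPerm, Equiv.Perm.inv_def, Equiv.apply_symm_apply] at hmono
  exact hmono.not_gt h

section PositionMatrix

variable {n : ℕ} {R : Type*} [Semiring R]

def positionMatrix (σ : Equiv.Perm (Fin n)) (r s : Fin n) : R :=
  if s = σ r then 1 else 0

theorem positionMatrix_eq_zero_or_eq_one (σ : Equiv.Perm (Fin n)) (r s : Fin n) :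
    positionMatrix (R := R) σ r s = 0 ∨ positionMatrix (R := R) σ r s = 1 := by
  unfold positionMatrix
  split_ifs <;> simp

theorem sum_mul_positionMatrix (σ : Equiv.Perm (Fin n)) (w : Fin n → R) (r : Fin n) :
    ∑ s, w s * positionMatrix σ r s = w (σ r) := by
  simp [positionMatrix]

theorem sum_positionMatrix_row (σ : Equiv.Perm (Fin n)) (r : Fin n) :
    ∑ s, positionMatrix (R := R) σ r s = 1 := by
  simpa using sum_mul_positionMatrix (R := R) σ 1 r

theorem sum_positionMatrix_col (σ : Equiv.Perm (Fin n)) (s : Fin n) :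
    ∑ r, positionMatrix (R := R) σ r s = 1 := by
  simp only [positionMatrix]
  rw [Equiv.sum_comp σ (fun t => if s = t then (1 : R) else 0)]
  simp

end PositionMatrix

theorem sum_mul_positionMatrix_sub {n : ℕ} {R : Type*} [Ring R] (σ : Equiv.Perm (Fin n))
    (w : Fin n → R) (j k : Fin n) :
    ∑ s, w s * (positionMatrix σ k s - positionMatrix σ j s) = w (σ k) - w (σ j) := by
  simp only [mul_sub, sum_sub_distrib, sum_mul_positionMatrix]

theorem arc_le_rank_sub {m : ℕ} (σ : Equiv.Perm (Fin m)) (ψ : Fin m → ℝ)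
    (hσ : ∀ j k, ψ j < ψ k → σ j < σ k) {j k : Fin m} {x y : ℝ} (hx : x = 0 ∨ x = 1)
    (hxy : x + y = 1) (hLN : x - ((m : ℝ) - 1) * y ≤ ψ k - ψ j) :
    x - (m : ℝ) * y ≤ ((σ k : ℕ) : ℝ) - ((σ j : ℕ) : ℝ) := by
  have hσj : ((σ j : ℕ) : ℝ) + 1 ≤ m := by exact_mod_cast (σ j).isLt
  have hσk : (0 : ℝ) ≤ ((σ k : ℕ) : ℝ) := Nat.cast_nonneg _
  rcases hx with rfl | rfl
  · obtain rfl : y = 1 := by linarith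
    linarith
  · obtain rfl : y = 0 := by linarith
    have hlt : σ j < σ k := hσ j k (by linarith)
    have : ((σ j : ℕ) : ℝ) + 1 ≤ ((σ k : ℕ) : ℝ) := by exact_mod_cast hlt
    linarith

theorem stmt_16_general (m : ℕ) (E : Fin m → Fin m → Prop)
    (z : Fin m → Fin m → ℝ) (ψ : Fin m → ℝ)
    (h01 : ∀ j k, z j k = 0 ∨ z j k = 1)
    (hsum : ∀ j k, E j k → z j k + z k j = 1)
    (hLN : ∀ j k, E j k → z j k - ((m : ℝ) - 1) * z k j ≤ ψ k - ψ j) :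
    ∃ o : Fin m → Fin m → ℝ,
      (∀ r s, o r s = 0 ∨ o r s = 1) ∧
      (∀ r, ∑ s, o r s = 1) ∧
      (∀ s, ∑ r, o r s = 1) ∧
      (∀ j k : Fin m, ψ j < ψ k →
        ∑ s : Fin m, ((s : ℕ) + 1 : ℝ) * o j s < ∑ s : Fin m, ((s : ℕ) + 1 : ℝ) * o k s) ∧
      (∀ j k, E j k →
        z j k - (m : ℝ) * z k j ≤ ∑ s : Fin m, ((s : ℕ) + 1 : ℝ) * (o k s - o j s)) := by
  set σ := rankPerm ψ
  have hσ : ∀ j k, ψ j < ψ k → σ j < σ k := fun _ _ => rankPerm_lt_rankPerm ψ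
  refine ⟨positionMatrix σ, positionMatrix_eq_zero_or_eq_one σ, sum_positionMatrix_row σ,
    sum_positionMatrix_col σ, fun j k hjk => ?_, fun j k hjk => ?_⟩
  · simp only [sum_mul_positionMatrix]
    have : ((σ j : ℕ) : ℝ) < ((σ k : ℕ) : ℝ) := by exact_mod_cast hσ j k hjk
    linarith
  · rw [sum_mul_positionMatrix_sub, add_sub_add_right_eq_sub]
    exact arc_le_rank_sub σ ψ hσ (h01 j k) (hsum j k hjk) (hLN j k hjk)

theorem stmt_16 (m : ℕ) (E : Fin m → Fin m → Prop)
    (hE_symm : ∀ j k, E j k → E k j)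
    (z : Fin m → Fin m → ℝ) (ψ : Fin m → ℝ)
    (h01 : ∀ j k, z j k = 0 ∨ z j k = 1)
    (hsum : ∀ j k, E j k → z j k + z k j = 1)
    (hLN : ∀ j k, E j k → z j k - ((m : ℝ) - 1) * z k j ≤ ψ k - ψ j)
    (hψ : ∀ v, 1 ≤ ψ v ∧ ψ v ≤ (m : ℝ)) :
    ∃ o : Fin m → Fin m → ℝ,
      (∀ r s, o r s = 0 ∨ o r s = 1) ∧
      (∀ r, ∑ s, o r s = 1) ∧
      (∀ s, ∑ r, o r s = 1) ∧
      (∀ j k : Fin m, ψ j < ψ k →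
        ∑ s : Fin m, ((s : ℕ) + 1 : ℝ) * o j s < ∑ s : Fin m, ((s : ℕ) + 1 : ℝ) * o k s) ∧
      (∀ j k, E j k →
        z j k - (m : ℝ) * z k j ≤ ∑ s : Fin m, ((s : ℕ) + 1 : ℝ) * (o k s - o j s)) :=
  stmt_16_general m E z ψ h01 hsum hLN
end
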